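/- Let h : ℝ → ℝ be strictly monotone (either strictly increasing or strictly decreasing) and let X, Y be real-valued random variables on a common probability space with continuous cdfs G_X, G_Y. Then d₁²(h(X), h(Y)) = d₁²(X, Y), i.e. 3·E[|G_{h(X)}(h(X)) − G_{h(Y)}(h(Y))|²] = 3·E[|G_X(X) − G_Y(Y)|²] (invariance of the dependence part d₁ of the distance d_θ under monotone transformations). -/

import Mathlib

/-! A strictly increasing `h` leaves the events `{X ≤ x}` unchanged, so `G_{h(X)} ∘ h = G_X`.
A strictly decreasing `h` turns them into `{X ≥ x}`; a continuous cdf means the law of `X` has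
no atoms, so `G_{h(X)} ∘ h = 1 - G_X`, and the constant `1` cancels in `G_X(X) - G_Y(Y)`. -/

open MeasureTheory ProbabilityTheory Set

/-- The cdf of a real random variable `X` on `(Ω, μ)`. -/
noncomputable def cdfOf {Ω : Type*} [MeasurableSpace Ω] (μ : Measure Ω) (X : Ω → ℝ) :
    ℝ → ℝ :=
  fun x => (μ {ω | X ω ≤ x}).toReal

lemma nullSingletonClass_of_continuous_cdf (ν : Measure ℝ) [IsProbabilityMeasure ν]
    (hc : Continuous (cdf ν)) : NullSingletonClass ν where
  measure_singleton x := by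
    rw [← measure_cdf ν, StieltjesFunction.measure_singleton,
      hc.continuousWithinAt.leftLim_eq, sub_self, ENNReal.ofReal_zero]

section

variable {Ω : Type*} [MeasurableSpace Ω] (μ : Measure Ω) {X : Ω → ℝ} {h : ℝ → ℝ}

lemma cdfOf_eq_cdf_map [IsProbabilityMeasure μ] (hX : Measurable X) :
    cdfOf μ X = cdf (μ.map X) := by
  have := Measure.isProbabilityMeasure_map (μ := μ) hX.aemeasurable
  ext x
  rw [cdf_eq_real, measureReal_def, Measure.map_apply hX measurableSet_Iic]
  rfl

lemma cdfOf_comp_of_strictMono (hh : StrictMono h) (x : ℝ) :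
    cdfOf μ (fun ω => h (X ω)) (h x) = cdfOf μ X x := by
  simp only [cdfOf, hh.le_iff_le]

/-- Without continuity of the cdf this fails: `1 - cdfOf μ X x` is `P(X > x)`, not `P(X ≥ x)`. -/
lemma cdfOf_comp_of_strictAnti [IsProbabilityMeasure μ] (hX : Measurable X)
    (hc : Continuous (cdfOf μ X)) (hh : StrictAnti h) (x : ℝ) :
    cdfOf μ (fun ω => h (X ω)) (h x) = 1 - cdfOf μ X x := by
  rw [cdfOf_eq_cdf_map μ hX] at hc
  have := Measure.isProbabilityMeasure_map (μ := μ) hX.aemeasurable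
  have := nullSingletonClass_of_continuous_cdf (μ.map X) hc
  calc cdfOf μ (fun ω => h (X ω)) (h x) = (μ.map X).real (Iio x)ᶜ := by
        rw [measureReal_def, Measure.map_apply hX measurableSet_Iio.compl]
        simp only [cdfOf, hh.le_iff_ge]
        congr 2
        ext ω
        simp
    _ = 1 - (μ.map X).real (Iio x) := probReal_compl_eq_one_sub measurableSet_Iio
    _ = 1 - (μ.map X).real (Iic x) := by rw [measureReal_congr Iio_ae_eq_Iic]
    _ = 1 - cdfOf μ X x := by rw [cdfOf_eq_cdf_map μ hX, cdf_eq_real]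

end

/-- For `h` strictly monotone (increasing or decreasing) and `X`, `Y`
with continuous cdfs, the dependence part of the distance is invariant:
`3·E[|G_{h(X)}(h(X)) − G_{h(Y)}(h(Y))|²] = 3·E[|G_X(X) − G_Y(Y)|²]`. -/
theorem d1_sq_invariant_under_monotone
    {Ω : Type*} [MeasurableSpace Ω] (μ : Measure Ω) [IsProbabilityMeasure μ]
    (X Y : Ω → ℝ) (hX : Measurable X) (hY : Measurable Y)
    (hGXc : Continuous (cdfOf μ X)) (hGYc : Continuous (cdfOf μ Y))
    (h : ℝ → ℝ) (hh : StrictMono h ∨ StrictAnti h) :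
    3 * ∫ ω, |cdfOf μ (fun ω' => h (X ω')) (h (X ω))
          - cdfOf μ (fun ω' => h (Y ω')) (h (Y ω))| ^ 2 ∂μ
      = 3 * ∫ ω, |cdfOf μ X (X ω) - cdfOf μ Y (Y ω)| ^ 2 ∂μ := by
  congr 2
  funext ω
  rcases hh with hh | hh
  · rw [cdfOf_comp_of_strictMono μ hh, cdfOf_comp_of_strictMono μ hh]
  · rw [cdfOf_comp_of_strictAnti μ hX hGXc hh, cdfOf_comp_of_strictAnti μ hY hGYc hh,
      sub_sub_sub_cancel_left, abs_sub_comm]
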